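/- arXiv:2007.08841 — 7 statements merged into one kernel-verified Lean document; each statement's English description precedes it below -/
import Mathlib

section
/- Let (λ_n) be a strictly increasing real sequence with gaps at least d > 0, and let (c_n) be absolutely summable complex numbers with ε := Σ_n |c_n| satisfying ε(1 + 2/d) < 1. Then the function F(z) = 1 + Σ_n c_n/(λ_n − z) has no zeros in the set of z ∈ ℂ with |z − λ_n| ≥ d/2 for all n. -/
/-! Away from the poles each term satisfies `‖c n / (λ n - z)‖ ≤ (2 / d) ‖c n‖`, so the series has
norm at most `2ε / d`, which is `< 1` because `ε (1 + 2 / d) < 1`; hence `1 + ∑ …` cannot vanish. -/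

theorem norm_tsum_div_le_of_le_norm {ι 𝕜 : Type*} [NormedDivisionRing 𝕜] {c a : ι → 𝕜} {r : ℝ}
    (hr : 0 < r) (ha : ∀ i, r ≤ ‖a i‖) (hc : Summable fun i => ‖c i‖) :
    ‖∑' i, c i / a i‖ ≤ (∑' i, ‖c i‖) / r :=
  tsum_of_norm_bounded (hc.hasSum.div_const r) fun i => by
    rw [norm_div]
    exact div_le_div_of_nonneg_left (norm_nonneg _) hr (ha i)

theorem one_add_ne_zero_of_norm_lt_one {R : Type*} [NormedRing R] [NormOneClass R] {w : R}
    (hw : ‖w‖ < 1) : 1 + w ≠ 0 := fun h => by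
  rw [eq_neg_of_add_eq_zero_right h, norm_neg, norm_one] at hw
  exact hw.false

theorem F_no_zeros_general (lam : ℤ → ℝ) (d : ℝ) (hd : 0 < d)
    (c : ℤ → ℂ) (hc : Summable fun n => ‖c n‖)
    (ε : ℝ) (hε : ε = ∑' n : ℤ, ‖c n‖) (hsmall : ε * (1 + 2 / d) < 1) :
    ∀ z : ℂ, (∀ n : ℤ, d / 2 ≤ ‖z - (lam n : ℂ)‖) →
      1 + ∑' n : ℤ, c n / ((lam n : ℂ) - z) ≠ 0 := by
  intro z hz
  have hε0 : 0 ≤ ε := hε ▸ tsum_nonneg fun n => norm_nonneg _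
  apply one_add_ne_zero_of_norm_lt_one
  calc ‖∑' n : ℤ, c n / ((lam n : ℂ) - z)‖ ≤ ε / (d / 2) := by
        rw [hε]
        exact norm_tsum_div_le_of_le_norm (half_pos hd) (fun n => norm_sub_rev z _ ▸ hz n) hc
    _ = ε * (1 + 2 / d) - ε := by ring
    _ < 1 := by linarith

theorem F_no_zeros (lam : ℤ → ℝ) (d : ℝ) (hd : 0 < d)
    (hmono : StrictMono lam) (hgap : ∀ n : ℤ, d ≤ lam (n + 1) - lam n)
    (c : ℤ → ℂ) (hc : Summable fun n => ‖c n‖)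
    (ε : ℝ) (hε : ε = ∑' n : ℤ, ‖c n‖) (hsmall : ε * (1 + 2 / d) < 1) :
    ∀ z : ℂ, (∀ n : ℤ, d / 2 ≤ ‖z - (lam n : ℂ)‖) →
      1 + ∑' n : ℤ, c n / ((lam n : ℂ) - z) ≠ 0 :=
  F_no_zeros_general lam d hd c hc ε hε hsmall
end

section
/- Let (λ_n)_{n∈ℤ} be a strictly increasing real sequence with gaps at least d > 0 and let (ν_n)_{n∈ℤ} be complex numbers with Σ_n |ν_n − λ_n| < ∞. Then for each ε ∈ (0, d/2), the infinite product Π_n (ν_n − z)/(λ_n − z) converges uniformly on the set R(ε) = { z : |z − λ_n| ≥ ε for all n }. -/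
/-!
On `R(ε)` we have `(ν n - z) / (λ n - z) = 1 + (ν n - λ n) / (λ n - z)`, and the second summand is
bounded by `‖ν n - λ n‖ / ε`, which is summable. A product `∏ (1 + f n)` whose factors have
summable sup norms converges in the Banach algebra of bounded continuous functions on the set,
which is uniform convergence there.
-/

open Filter BoundedContinuousFunction

namespace Summable

variable {α ι R : Type*} [TopologicalSpace α] [NormedCommRing R] [NormOneClass R] [CompleteSpace R]
  {f : ι → α → R} {u : ι → ℝ} {K : Set α}

theorem hasProdUniformlyOn_one_add_of_forall_norm_le (hu : Summable u)
    (h : ∀ i, ∀ x ∈ K, ‖f i x‖ ≤ u i) (hcts : ∀ i, ContinuousOn (f i) K) :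
    HasProdUniformlyOn (fun i x ↦ 1 + f i x) (fun x ↦ ∏' i, (1 + f i x)) K := by
  rw [hasProdUniformlyOn_iff_tendstoUniformlyOn, tendstoUniformlyOn_iff_tendstoUniformly_comp_coe]
  rcases isEmpty_or_nonempty K with hK | hK
  · exact fun _ _ ↦ .of_forall fun _ x ↦ isEmptyElim x
  obtain ⟨x₀, hx₀⟩ := Classical.arbitrary K
  let F i : K →ᵇ R := .ofNormedAddCommGroup _ (hcts i).domRestrict (u i) fun x ↦ h i x x.2
  have hF : Summable fun i ↦ ‖F i‖ := hu.of_nonneg_of_le (fun _ ↦ norm_nonneg _) fun i ↦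
    norm_ofNormedAddCommGroup_le _ ((norm_nonneg _).trans (h i x₀ hx₀)) _
  have hprod : TendstoUniformly (fun s x ↦ (∏ i ∈ s, (1 + F i)) x) ⇑(∏' i, (1 + F i)) atTop :=
    tendsto_iff_tendstoUniformly.mp (multipliable_one_add_of_summable hF).hasProd
  have hF_prod s (x : K) : (∏ i ∈ s, (1 + F i)) x = ∏ i ∈ s, (1 + f i x) := by
    simp only [prod_apply, coe_add, coe_one, Pi.add_apply, Pi.one_apply]
    rfl
  simp only [hF_prod] at hprod
  convert hprod using 1
  exact funext fun x ↦ HasProd.tprod_eq (hprod.tendsto_at x)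

end Summable

theorem div_sub_eq_one_add_div_sub {𝕜 : Type*} [DivisionRing 𝕜] {μ ν z : 𝕜} (h : μ - z ≠ 0) :
    (ν - z) / (μ - z) = 1 + (ν - μ) / (μ - z) := by
  rw [← div_self h, ← add_div, add_comm, sub_add_sub_cancel]

theorem tendstoUniformlyOn_prod_div_sub {ι : Type*} {μ ν : ι → ℂ} {ε : ℝ} (hε : 0 < ε)
    (hν : Summable fun n ↦ ‖ν n - μ n‖) :
    TendstoUniformlyOn (fun (s : Finset ι) (z : ℂ) ↦ ∏ n ∈ s, (ν n - z) / (μ n - z))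
      (fun z ↦ ∏' n, (ν n - z) / (μ n - z)) atTop {z | ∀ n, ε ≤ ‖z - μ n‖} := by
  set K := {z : ℂ | ∀ n, ε ≤ ‖z - μ n‖}
  have hdist {z} (hz : z ∈ K) n : ε ≤ ‖μ n - z‖ := norm_sub_rev z (μ n) ▸ hz n
  have hne {z} (hz : z ∈ K) n : μ n - z ≠ 0 := norm_pos_iff.mp (hε.trans_le (hdist hz n))
  have hbound n : ∀ z ∈ K, ‖(ν n - μ n) / (μ n - z)‖ ≤ ‖ν n - μ n‖ / ε := fun z hz ↦ by
    rw [norm_div]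
    exact div_le_div_of_nonneg_left (norm_nonneg _) hε (hdist hz n)
  have hcts n : ContinuousOn (fun z ↦ (ν n - μ n) / (μ n - z)) K :=
    continuousOn_const.div (by fun_prop) fun z hz ↦ hne hz n
  have hprod := (hν.div_const ε).hasProdUniformlyOn_one_add_of_forall_norm_le hbound hcts
  rw [hasProdUniformlyOn_iff_tendstoUniformlyOn] at hprod
  refine (hprod.congr (.of_forall fun s z hz ↦ ?_)).congr_right fun z hz ↦ ?_ <;>
    simp only [div_sub_eq_one_add_div_sub (hne hz _)]

theorem product_tendstoUniformlyOn_general (lam : ℤ → ℝ) (d : ℝ)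
    (ν : ℤ → ℂ) (hν : Summable fun n => ‖ν n - (lam n : ℂ)‖)
    (ε : ℝ) (hε : ε ∈ Set.Ioo 0 (d / 2)) :
    TendstoUniformlyOn
      (fun (s : Finset ℤ) (z : ℂ) => ∏ n ∈ s, (ν n - z) / ((lam n : ℂ) - z))
      (fun z : ℂ => ∏' n : ℤ, (ν n - z) / ((lam n : ℂ) - z))
      atTop
      {z : ℂ | ∀ n : ℤ, ε ≤ ‖z - (lam n : ℂ)‖} :=
  tendstoUniformlyOn_prod_div_sub hε.1 hν

theorem product_tendstoUniformlyOn (lam : ℤ → ℝ) (d : ℝ) (hd : 0 < d)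
    (hmono : StrictMono lam) (hgap : ∀ n : ℤ, d ≤ lam (n + 1) - lam n)
    (ν : ℤ → ℂ) (hν : Summable fun n => ‖ν n - (lam n : ℂ)‖)
    (ε : ℝ) (hε : ε ∈ Set.Ioo 0 (d / 2)) :
    TendstoUniformlyOn
      (fun (s : Finset ℤ) (z : ℂ) => ∏ n ∈ s, (ν n - z) / ((lam n : ℂ) - z))
      (fun z : ℂ => ∏' n : ℤ, (ν n - z) / ((lam n : ℂ) - z))
      atTop
      {z : ℂ | ∀ n : ℤ, ε ≤ ‖z - (lam n : ℂ)‖} :=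
  product_tendstoUniformlyOn_general lam d ν hν ε hε
end

section
/- Under the assumptions Σ_n |ν_n − λ_n| < ∞ and gaps of (λ_n) bounded below by d > 0, the function F̃(z) = Π_n (ν_n − z)/(λ_n − z) satisfies F̃(iu) → 1 as u → +∞. -/
/-!
Each factor is `1 + (ν n - λ n) / (λ n - i u)`. Since `|λ n - i u| ≥ u`, the perturbation is
dominated by the summable `‖ν n - λ n‖` once `u ≥ 1`, and tends to `0` as `u → ∞` for each `n`;
dominated convergence for infinite products then gives the limit `∏ 1 = 1`.
-/

open Filter Topology Complex

lemma abs_le_norm_ofReal_sub_mul_I (x u : ℝ) : |u| ≤ ‖(x : ℂ) - u * I‖ := by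
  simpa using abs_im_le_norm ((x : ℂ) - u * I)

lemma ofReal_sub_mul_I_ne_zero (x : ℝ) {u : ℝ} (hu : u ≠ 0) : (x : ℂ) - u * I ≠ 0 :=
  norm_pos_iff.mp ((abs_pos.mpr hu).trans_le (abs_le_norm_ofReal_sub_mul_I x u))

lemma sub_mul_I_div_eq_one_add (z : ℂ) (x : ℝ) {u : ℝ} (hu : u ≠ 0) :
    (z - u * I) / ((x : ℂ) - u * I) = 1 + (z - x) / ((x : ℂ) - u * I) := by
  field_simp [ofReal_sub_mul_I_ne_zero x hu]
  ring

lemma norm_div_ofReal_sub_mul_I_le (c : ℂ) (x : ℝ) {u : ℝ} (hu : 0 < u) :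
    ‖c / ((x : ℂ) - u * I)‖ ≤ ‖c‖ / u := by
  rw [norm_div]
  gcongr
  simpa [abs_of_pos hu] using abs_le_norm_ofReal_sub_mul_I x u

lemma tendsto_div_ofReal_sub_mul_I_atTop (c : ℂ) (x : ℝ) :
    Tendsto (fun u : ℝ => c / ((x : ℂ) - u * I)) atTop (𝓝 0) := by
  refine squeeze_zero_norm' ?_ ((tendsto_const_nhds (x := ‖c‖)).div_atTop tendsto_id)
  filter_upwards [eventually_gt_atTop 0] with u hu using norm_div_ofReal_sub_mul_I_le c x hu

theorem tildeF_tendsto_one_general (lam : ℤ → ℝ)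
    (ν : ℤ → ℂ) (hν : Summable fun n => ‖ν n - (lam n : ℂ)‖) :
    Tendsto
      (fun u : ℝ => ∏' n : ℤ, (ν n - u * Complex.I) / ((lam n : ℂ) - u * Complex.I))
      atTop (nhds 1) := by
  have hdominated : ∀ᶠ u : ℝ in atTop, ∀ n,
      ‖(ν n - lam n) / ((lam n : ℂ) - u * I)‖ ≤ ‖ν n - (lam n : ℂ)‖ := by
    filter_upwards [eventually_ge_atTop 1] with u hu n
    exact (norm_div_ofReal_sub_mul_I_le _ _ (by linarith)).trans (div_le_self (norm_nonneg _) hu)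
  have hlim := tendsto_tprod_one_add_of_dominated_convergence (g := 0) hν
    (fun n => tendsto_div_ofReal_sub_mul_I_atTop (ν n - lam n) (lam n)) hdominated
  simp only [Pi.zero_apply, add_zero, tprod_one] at hlim
  refine hlim.congr' ?_
  filter_upwards [eventually_gt_atTop 0] with u hu
  exact tprod_congr fun n => (sub_mul_I_div_eq_one_add _ _ hu.ne').symm

theorem tildeF_tendsto_one (lam : ℤ → ℝ) (d : ℝ) (hd : 0 < d)
    (hmono : StrictMono lam) (hgap : ∀ n : ℤ, d ≤ lam (n + 1) - lam n)
    (ν : ℤ → ℂ) (hν : Summable fun n => ‖ν n - (lam n : ℂ)‖) :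
    Tendsto
      (fun u : ℝ => ∏' n : ℤ, (ν n - u * Complex.I) / ((lam n : ℂ) - u * Complex.I))
      atTop (nhds 1) :=
  tildeF_tendsto_one_general lam ν hν
end

section
/- Let (λ_n) be a strictly increasing real sequence with gaps at least d > 0 and (ν_n) complex with S := Σ_n |ν_n − λ_n| < ∞. Then for every n, the partial-product sequence Π_{m≠n} |(ν_m − λ_n)/(λ_m − λ_n)| is bounded above by exp(S/d), uniformly in n. -/
/-! Since `‖ν m - λ n‖ ≤ ‖ν m - λ m‖ + |λ m - λ n|` and `|λ m - λ n| ≥ d`, each factor is at most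
`1 + ‖ν m - λ m‖ / d ≤ exp (‖ν m - λ m‖ / d)`, so every finite product is at most
`exp (∑ ‖ν m - λ m‖ / d) ≤ exp (S / d)`. -/

section

variable {𝕜 : Type*} [NormedField 𝕜] {z a b : 𝕜} {d : ℝ}

theorem norm_sub_div_sub_le_one_add (hd : 0 < d) (hab : d ≤ ‖b - a‖) :
    ‖(z - a) / (b - a)‖ ≤ 1 + ‖z - b‖ / d := by
  have hpos : 0 < ‖b - a‖ := hd.trans_le hab
  have htri : ‖z - a‖ ≤ ‖z - b‖ + ‖b - a‖ := norm_sub_le_norm_sub_add_norm_sub z b a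
  calc ‖(z - a) / (b - a)‖ = ‖z - a‖ / ‖b - a‖ := norm_div _ _
    _ ≤ (‖z - b‖ + ‖b - a‖) / ‖b - a‖ := by gcongr
    _ = 1 + ‖z - b‖ / ‖b - a‖ := by field_simp; ring
    _ ≤ 1 + ‖z - b‖ / d := by gcongr

theorem norm_sub_div_sub_le_exp (hd : 0 < d) (hab : d ≤ ‖b - a‖) :
    ‖(z - a) / (b - a)‖ ≤ Real.exp (‖z - b‖ / d) :=
  (norm_sub_div_sub_le_one_add hd hab).trans <| by
    linarith [Real.add_one_le_exp (‖z - b‖ / d)]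

end

theorem partial_products_bounded_general (lam : ℤ → ℝ) (d : ℝ) (hd : 0 < d)
    (hgap : ∀ m n : ℤ, m ≠ n → d ≤ |lam m - lam n|)
    (ν : ℤ → ℂ) (S : ℝ) (hS : HasSum (fun n => ‖ν n - (lam n : ℂ)‖) S) :
    ∀ n : ℤ, ∀ s : Finset ℤ, n ∉ s →
      ∏ m ∈ s, ‖(ν m - (lam n : ℂ)) / ((lam m : ℂ) - (lam n : ℂ))‖ ≤
        Real.exp (S / d) := by
  intro n s hns
  have hfactor : ∀ m ∈ s, ‖(ν m - (lam n : ℂ)) / ((lam m : ℂ) - (lam n : ℂ))‖ ≤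
      Real.exp (‖ν m - (lam m : ℂ)‖ / d) := by
    intro m hm
    refine norm_sub_div_sub_le_exp hd ?_
    rw [← Complex.ofReal_sub, Complex.norm_real, Real.norm_eq_abs]
    exact hgap m n (ne_of_mem_of_not_mem hm hns)
  have hpartial : ∑ m ∈ s, ‖ν m - (lam m : ℂ)‖ ≤ S :=
    sum_le_hasSum s (fun m _ => norm_nonneg _) hS
  calc ∏ m ∈ s, ‖(ν m - (lam n : ℂ)) / ((lam m : ℂ) - (lam n : ℂ))‖
      ≤ ∏ m ∈ s, Real.exp (‖ν m - (lam m : ℂ)‖ / d) :=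
        Finset.prod_le_prod (fun m _ => norm_nonneg _) hfactor
    _ = Real.exp ((∑ m ∈ s, ‖ν m - (lam m : ℂ)‖) / d) := by
        rw [← Real.exp_sum, Finset.sum_div]
    _ ≤ Real.exp (S / d) := by gcongr

theorem partial_products_bounded (lam : ℤ → ℝ) (d : ℝ) (hd : 0 < d)
    (hmono : StrictMono lam) (hgap : ∀ m n : ℤ, m ≠ n → d ≤ |lam m - lam n|)
    (ν : ℤ → ℂ) (S : ℝ) (hS : HasSum (fun n => ‖ν n - (lam n : ℂ)‖) S) :
    ∀ n : ℤ, ∀ s : Finset ℤ, n ∉ s →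
      ∏ m ∈ s, ‖(ν m - (lam n : ℂ)) / ((lam m : ℂ) - (lam n : ℂ))‖ ≤
        Real.exp (S / d) :=
  partial_products_bounded_general lam d hd hgap ν S hS
end

section
/- Let (λ_n) have gaps at least d > 0 and Σ_n |ν_n − λ_n| < ∞. Define c_n := (λ_n − ν_n) · Π_{m≠n} (ν_m − λ_n)/(λ_m − λ_n). Then Σ_n |c_n| < ∞. -/
/-! Each factor of the product defining `c n` is `1 + (ν m - λ m) / (λ m - λ n)`, so by the gap
condition its norm is at most `1 + ‖ν m - λ m‖ / d ≤ exp (‖ν m - λ m‖ / d)`. Hence all the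
products are bounded by `exp (∑ ‖ν m - λ m‖ / d)` uniformly in `n`, and `‖c n‖` is dominated by a
constant multiple of the summable sequence `‖ν n - λ n‖`. -/

open Real

lemma norm_div_sub_le_exp {𝕜 : Type*} [NormedField 𝕜] {x y z : 𝕜} {d : ℝ} (hd : 0 < d)
    (hyz : d ≤ ‖y - z‖) : ‖(x - z) / (y - z)‖ ≤ exp (‖x - y‖ / d) := by
  have hyz_pos : 0 < ‖y - z‖ := hd.trans_le hyz
  calc ‖(x - z) / (y - z)‖
      ≤ (‖x - y‖ + ‖y - z‖) / ‖y - z‖ := by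
        rw [norm_div]
        gcongr
        exact norm_sub_le_norm_sub_add_norm_sub x y z
    _ = ‖x - y‖ / ‖y - z‖ + 1 := by rw [add_div, div_self hyz_pos.ne']
    _ ≤ ‖x - y‖ / d + 1 := by gcongr
    _ ≤ exp (‖x - y‖ / d) := add_one_le_exp _

lemma norm_tprod_le_exp_tsum {ι R : Type*} [NormedCommRing R] [NormOneClass R] {f : ι → R}
    {a : ι → ℝ} (ha : Summable a) (ha_nonneg : ∀ i, 0 ≤ a i) (hf : ∀ i, ‖f i‖ ≤ exp (a i)) :
    ‖∏' i, f i‖ ≤ exp (∑' i, a i) := by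
  by_cases hmul : Multipliable f
  · refine le_of_tendsto' ((continuous_norm.tendsto _).comp hmul.hasProd) fun s => ?_
    calc ‖∏ i ∈ s, f i‖
        ≤ ∏ i ∈ s, exp (a i) :=
          (s.norm_prod_le f).trans (s.prod_le_prod (fun i _ => norm_nonneg _) fun i _ => hf i)
      _ = exp (∑ i ∈ s, a i) := (exp_sum s a).symm
      _ ≤ exp (∑' i, a i) := exp_le_exp.2 (ha.sum_le_tsum s fun i _ => ha_nonneg i)
  · rw [tprod_eq_one_of_not_multipliable hmul, norm_one]
    exact one_le_exp (tsum_nonneg ha_nonneg)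

theorem residues_summable_general (lam : ℤ → ℝ) (d : ℝ) (hd : 0 < d)
    (hgap : ∀ m n : ℤ, m ≠ n → d ≤ |lam m - lam n|)
    (ν : ℤ → ℂ) (hν : Summable fun n => ‖ν n - (lam n : ℂ)‖)
    (c : ℤ → ℂ)
    (hc : ∀ n : ℤ, c n = ((lam n : ℂ) - ν n) *
      ∏' m : {m : ℤ // m ≠ n}, (ν (m : ℤ) - (lam n : ℂ)) / ((lam (m : ℤ) : ℂ) - (lam n : ℂ))) :
    Summable fun n => ‖c n‖ := by
  set a : ℤ → ℝ := fun m => ‖ν m - (lam m : ℂ)‖ / d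
  have ha : Summable a := hν.div_const d
  have ha_nonneg : ∀ m, 0 ≤ a m := fun m => by positivity
  have hprod : ∀ n, ‖∏' m : {m : ℤ // m ≠ n},
      (ν (m : ℤ) - (lam n : ℂ)) / ((lam (m : ℤ) : ℂ) - (lam n : ℂ))‖ ≤ exp (∑' m, a m) := by
    intro n
    refine (norm_tprod_le_exp_tsum (a := fun m : {m : ℤ // m ≠ n} => a m) (ha.subtype _)
      (fun m => ha_nonneg m) fun m => ?_).trans
      (exp_le_exp.2 (Summable.tsum_subtype_le a _ ha_nonneg ha))
    refine norm_div_sub_le_exp hd ?_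
    rw [← Complex.ofReal_sub, Complex.norm_real, Real.norm_eq_abs]
    exact hgap m n m.2
  refine (hν.mul_right (exp (∑' m, a m))).of_nonneg_of_le (fun n => norm_nonneg _) fun n => ?_
  rw [hc n, norm_mul, norm_sub_rev]
  exact mul_le_mul_of_nonneg_left (hprod n) (norm_nonneg _)

theorem residues_summable (lam : ℤ → ℝ) (d : ℝ) (hd : 0 < d)
    (hmono : StrictMono lam) (hgap : ∀ m n : ℤ, m ≠ n → d ≤ |lam m - lam n|)
    (ν : ℤ → ℂ) (hν : Summable fun n => ‖ν n - (lam n : ℂ)‖)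
    (c : ℤ → ℂ)
    (hc : ∀ n : ℤ, c n = ((lam n : ℂ) - ν n) *
      ∏' m : {m : ℤ // m ≠ n}, (ν (m : ℤ) - (lam n : ℂ)) / ((lam (m : ℤ) : ℂ) - (lam n : ℂ))) :
    Summable fun n => ‖c n‖ :=
  residues_summable_general lam d hd hgap ν hν c hc
end

section
/- The nonzero real solutions μ of the equation tan(πμ) = πμ/(μ²+1) can be enumerated as μ_n = n + ε_n, n ∈ ℤ \ {0}, where n·ε_n → 1 as |n| → ∞; in particular ε_n = n^{-1}(1+o(1)) and Σ_n |μ_n − n| diverges. -/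
/-!
With `rhs x = π x / (x ^ 2 + 1)` and `psi x = x - arctan (rhs x) / π`, the equation holds at `x`
exactly when `psi x` is an integer, because `arctan` inverts the `π`-periodic `tan` on
`(-π/2, π/2)`. Since `psi' = 1 - (1 - x ^ 2) / ((x ^ 2 + 1) ^ 2 + π ^ 2 x ^ 2) > 0` off `0` and
`|psi x - x| < 1/2`, `psi` is an increasing bijection of `ℝ` with `psi 0 = 0`, so the solutions are
`μ n = psi⁻¹ n`, `n ≠ 0`. Then `μ n - n = arctan (rhs (μ n)) / π`; as `rhs x⁻¹ = rhs x` and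
`(arctan ∘ rhs)' 0 = π`, `x arctan (rhs x) → π` as `|x| → ∞`, whence `(μ n - n) μ n → 1`,
`n (μ n - n) → 1`, and `μ n - n ~ 1 / n` is not summable.
-/

open Filter Real Topology Bornology Asymptotics

noncomputable section

namespace TanEquation

def rhs (x : ℝ) : ℝ := π * x / (x ^ 2 + 1)

def psi (x : ℝ) : ℝ := x - arctan (rhs x) / π

@[simp]
lemma rhs_zero : rhs 0 = 0 := by simp [rhs]

lemma rhs_inv (x : ℝ) : rhs x⁻¹ = rhs x := by
  rcases eq_or_ne x 0 with rfl | hx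
  · simp
  · unfold rhs
    field_simp
    ring

lemma hasDerivAt_rhs (x : ℝ) : HasDerivAt rhs (π * (1 - x ^ 2) / (x ^ 2 + 1) ^ 2) x := by
  have hden : x ^ 2 + 1 ≠ 0 := by positivity
  refine (((hasDerivAt_id x).const_mul π).div ((hasDerivAt_pow 2 x).add_const 1) hden).congr_deriv ?_
  simp only [id, Nat.cast_ofNat]
  ring

lemma hasDerivAt_psi (x : ℝ) :
    HasDerivAt psi (1 - (1 - x ^ 2) / ((x ^ 2 + 1) ^ 2 + π ^ 2 * x ^ 2)) x := by
  refine ((hasDerivAt_id x).sub ((hasDerivAt_rhs x).arctan.div_const π)).congr_deriv ?_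
  have hden : (x ^ 2 + 1) ^ 2 ≠ 0 := by positivity
  have hden' : (x ^ 2 + 1) ^ 2 + π ^ 2 * x ^ 2 ≠ 0 := by positivity
  simp only [rhs]
  field_simp

lemma continuous_psi : Continuous psi :=
  continuous_iff_continuousAt.mpr fun x => (hasDerivAt_psi x).continuousAt

lemma deriv_psi_pos {x : ℝ} (hx : x ≠ 0) : 0 < deriv psi x := by
  have hden : 0 < (x ^ 2 + 1) ^ 2 + π ^ 2 * x ^ 2 := by positivity
  rw [(hasDerivAt_psi x).deriv, sub_pos, div_lt_one hden]
  have : 0 < x ^ 2 := by positivity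
  nlinarith [sq_nonneg π]

lemma strictMono_psi : StrictMono psi := by
  refine StrictMonoOn.Iic_union_Ici (a := 0) ?_ ?_
  · exact strictMonoOn_of_deriv_pos (convex_Iic 0) continuous_psi.continuousOn
      fun x hx => deriv_psi_pos (by rw [interior_Iic] at hx; exact hx.ne)
  · exact strictMonoOn_of_deriv_pos (convex_Ici 0) continuous_psi.continuousOn
      fun x hx => deriv_psi_pos (by rw [interior_Ici] at hx; exact hx.ne')

lemma abs_sub_psi_lt (x : ℝ) : |x - psi x| < 1 / 2 := by
  rw [psi, sub_sub_cancel, abs_lt, lt_div_iff₀ pi_pos, div_lt_iff₀ pi_pos]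
  constructor
  · linarith [neg_pi_div_two_lt_arctan (rhs x)]
  · linarith [arctan_lt_pi_div_two (rhs x)]

lemma surjective_psi : Function.Surjective psi := fun y =>
  mem_range_of_exists_le_of_exists_ge continuous_psi
    ⟨y - 1 / 2, by linarith [(abs_lt.mp (abs_sub_psi_lt (y - 1 / 2))).1]⟩
    ⟨y + 1 / 2, by linarith [(abs_lt.mp (abs_sub_psi_lt (y + 1 / 2))).2]⟩

lemma psi_zero : psi 0 = 0 := by simp [psi]

lemma tan_eq_rhs_iff (x : ℝ) : tan (π * x) = rhs x ↔ ∃ n : ℤ, psi x = n := by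
  constructor
  · intro h
    refine ⟨round x, ?_⟩
    have htan : tan (π * (x - round x)) = rhs x := by
      rw [← h, show π * x = π * (x - round x) + round x * π by ring, tan_add_int_mul_pi]
    have hcos : cos (π * (x - round x)) ≠ 0 := by
      intro hc
      rw [tan_eq_sin_div_cos, hc, div_zero, eq_comm, rhs, div_eq_zero_iff,
        mul_eq_zero] at htan
      -- Mathlib's `tan` vanishes where `cos` does, and `rhs x = 0` only at `x = 0`.
      obtain (hπ | rfl) | hden := htan
      · exact pi_ne_zero hπ
      · simp at hc
      · nlinarith [sq_nonneg x]
    have hround : |x - round x| < 1 / 2 := by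
      refine (abs_sub_round x).lt_of_ne fun h => hcos ?_
      rcases (abs_eq (by norm_num)).mp h with h | h <;> simp [h, mul_neg, ← div_eq_mul_inv]
    have hlt : -(π / 2) < π * (x - round x) ∧ π * (x - round x) < π / 2 := by
      obtain ⟨h₁, h₂⟩ := abs_lt.mp hround
      constructor <;> nlinarith [pi_pos]
    rw [psi, ← htan, arctan_tan hlt.1 hlt.2]
    field_simp
    ring
  · rintro ⟨n, hn⟩
    have hx : π * x = arctan (rhs x) + n * π := by
      rw [← hn, psi]; field_simp; ring
    rw [hx, tan_add_int_mul_pi, tan_arctan]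

def μ (n : ℤ) : ℝ := Function.surjInv surjective_psi n

lemma psi_μ (n : ℤ) : psi (μ n) = n := Function.surjInv_eq surjective_psi n

lemma μ_eq_iff {n : ℤ} {x : ℝ} : μ n = x ↔ psi x = n :=
  ⟨fun h => h ▸ psi_μ n, fun h => strictMono_psi.injective (by rw [psi_μ, h])⟩

lemma μ_injective : Function.Injective μ := fun m n h => by
  exact_mod_cast (psi_μ m).symm.trans (μ_eq_iff.mp h.symm)

lemma μ_eq_zero_iff {n : ℤ} : μ n = 0 ↔ n = 0 := by
  rw [μ_eq_iff, psi_zero, eq_comm, Int.cast_eq_zero]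

lemma exists_ne_zero_μ_eq {x : ℝ} (hx : x ≠ 0) (hsol : tan (π * x) = rhs x) :
    ∃ n : ℤ, n ≠ 0 ∧ μ n = x := by
  obtain ⟨n, hn⟩ := (tan_eq_rhs_iff x).mp hsol
  refine ⟨n, fun h0 => hx ?_, μ_eq_iff.mpr hn⟩
  rwa [← μ_eq_iff.mpr hn, μ_eq_zero_iff]

lemma μ_sub_self (n : ℤ) : μ n - n = arctan (rhs (μ n)) / π := by
  rw [← psi_μ n, psi, sub_sub_cancel]

lemma abs_μ_sub_lt (n : ℤ) : |μ n - n| < 1 / 2 := by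
  simpa only [psi_μ] using abs_sub_psi_lt (μ n)

lemma tendsto_μ_cofinite : Tendsto μ cofinite (cobounded ℝ) := by
  have hcast : Tendsto (fun n : ℤ => ‖(n : ℝ)‖) cofinite atTop := by
    rw [tendsto_norm_atTop_iff_cobounded, Metric.cobounded_eq_cocompact]
    exact Int.tendsto_coe_cofinite
  rw [← tendsto_norm_atTop_iff_cobounded]
  refine tendsto_atTop_mono (fun n => ?_) (tendsto_atTop_add_const_right _ (-1 / 2) hcast)
  have := abs_μ_sub_lt n
  simp only [Real.norm_eq_abs]
  linarith [abs_sub_abs_le_abs_sub (n : ℝ) (μ n), abs_sub_comm (μ n) n]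

lemma tendsto_mul_arctan_rhs : Tendsto (fun x => x * arctan (rhs x)) (cobounded ℝ) (𝓝 π) := by
  have hslope := ((hasDerivAt_rhs 0).arctan).tendsto_slope_zero.comp tendsto_inv₀_cobounded'
  convert hslope using 2 with x
  · simp [rhs_inv]
  · simp

lemma tendsto_μ_sub_mul_μ : Tendsto (fun n => (μ n - n) * μ n) cofinite (𝓝 1) := by
  have h := (tendsto_mul_arctan_rhs.comp tendsto_μ_cofinite).div_const π
  rw [div_self pi_ne_zero] at h
  refine h.congr fun n => ?_
  simp only [Function.comp, μ_sub_self]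
  ring

lemma tendsto_μ_sub : Tendsto (fun n => μ n - n) cofinite (𝓝 0) := by
  have h := tendsto_μ_sub_mul_μ.mul (tendsto_inv₀_cobounded.comp tendsto_μ_cofinite)
  rw [one_mul] at h
  refine h.congr' ?_
  filter_upwards [eventually_cofinite_ne 0] with n hn
  simp [μ_eq_zero_iff.not.mpr hn]

lemma tendsto_mul_μ_sub : Tendsto (fun n : ℤ => (n : ℝ) * (μ n - n)) cofinite (𝓝 1) := by
  have h := tendsto_μ_sub_mul_μ.sub (tendsto_μ_sub.pow 2)
  rw [zero_pow two_ne_zero, sub_zero] at h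
  exact h.congr fun n => by ring

lemma not_summable_abs_μ_sub : ¬ Summable (fun n : ℤ => |μ n - n|) := by
  intro hsum
  have hequiv : (fun n => μ n - n) ~[cofinite] (fun n : ℤ => (n : ℝ)⁻¹) :=
    isEquivalent_of_tendsto_one (tendsto_mul_μ_sub.congr fun n => by simp [mul_comm])
  have hinv : Summable (fun n : ℤ => (n : ℝ)⁻¹) :=
    summable_of_isBigO' hsum.of_abs hequiv.isBigO_symm
  exact absurd (by simpa using hinv) (lt_irrefl 1 ∘ Real.summable_one_div_int_pow.mp)

end TanEquation

end

open Filter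

theorem tan_equation_solutions_enumeration :
    ∃ μ : ℤ → ℝ,
      (∀ n : ℤ, n ≠ 0 → μ n ≠ 0 ∧
        Real.tan (Real.pi * μ n) = Real.pi * μ n / ((μ n) ^ 2 + 1)) ∧
      (∀ m n : ℤ, m ≠ 0 → n ≠ 0 → μ m = μ n → m = n) ∧
      (∀ x : ℝ, x ≠ 0 → Real.tan (Real.pi * x) = Real.pi * x / (x ^ 2 + 1) →
        ∃ n : ℤ, n ≠ 0 ∧ μ n = x) ∧
      Tendsto (fun n : ℤ => (n : ℝ) * (μ n - n)) cofinite (nhds 1) ∧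
      ¬ Summable (fun n : ℤ => |μ n - n|) := by
  open TanEquation in
  exact ⟨μ, fun n hn => ⟨μ_eq_zero_iff.not.mpr hn, (tan_eq_rhs_iff _).mpr ⟨n, psi_μ n⟩⟩,
    fun _ _ _ _ h => μ_injective h, fun _ => exists_ne_zero_μ_eq,
    tendsto_mul_μ_sub, not_summable_abs_μ_sub⟩
end

section
/- Let (λ_n) be strictly increasing reals with gaps at least d, let c_n be complex with Σ|c_n| < ∞, and suppose for some index k with |c_k| < ε and ε(1+4/d) < 1 there is μ with |μ − λ_k| < d/2 satisfying 1 + Σ_n c_n/(λ_n − μ) = 0 and Σ_{n≠k} |c_n/(λ_n − μ)| < ε + 2ε/d. Then |μ − λ_k| < (d/(2ε))·|c_k|. -/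
/-!
Write `g n = c n / (λ n - μ)`. The equation `F(μ) = 0` isolates the `k`-th term as
`g k = -1 - ∑_{n ≠ k} g n`. Unconditional summability in `ℂ` is absolute, so the tail bound
and `ε (1 + 4/d) < 1` give `‖g k‖ > 1 - (ε + 2ε/d) > 2ε/d`. Since `‖g k‖ = ‖c k‖ / ‖μ - λ k‖`,
this is the claimed bound.
-/

-- A non-summable family has `∑' = 0`, which would make the equation read `1 = 0`.
theorem summable_of_one_add_tsum_eq_zero {ι α : Type*} [AddCommMonoidWithOne α]
    [TopologicalSpace α] [NeZero (1 : α)] {f : ι → α} (h : 1 + ∑' i, f i = 0) : Summable f := by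
  by_contra hf
  rw [tsum_eq_zero_of_not_summable hf, add_zero] at h
  exact one_ne_zero h

theorem norm_tsum_le_norm_add_tsum_norm_ne {ι E : Type*} [NormedAddCommGroup E]
    [NormedSpace ℝ E] [FiniteDimensional ℝ E] {f : ι → E} (hf : Summable f) (k : ι) :
    ‖∑' i, f i‖ ≤ ‖f k‖ + ∑' i : {i // i ≠ k}, ‖f i‖ := by
  have hsplit : ∑' i, f i = f k + ∑' i : {i // i ≠ k}, f i := by
    have hcompl : ({i | i ≠ k}ᶜ : Set ι) = {k} := by ext; simp
    rw [← hf.tsum_subtype_add_tsum_subtype_compl {i | i ≠ k}, add_comm, hcompl, tsum_singleton]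
    rfl
  have htail : Summable fun i : {i // i ≠ k} => ‖f i‖ :=
    summable_norm_iff.mpr (hf.subtype {i | i ≠ k})
  rw [hsplit]
  exact (norm_add_le _ _).trans (add_le_add_right (norm_tsum_le_tsum_norm htail) _)

theorem norm_lt_of_lt_norm_div {K : Type*} [NormedDivisionRing K] {a z : K} {t : ℝ}
    (ht : 0 < t) (h : t < ‖a / z‖) : ‖z‖ < ‖a‖ / t := by
  have hz : z ≠ 0 := by
    rintro rfl
    rw [div_zero, norm_zero] at h
    exact h.not_gt ht
  rw [norm_div, lt_div_iff₀ (norm_pos_iff.mpr hz)] at h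
  rwa [lt_div_iff₀ ht, mul_comm]

theorem eigenvalue_offset_bound_general (lam : ℤ → ℝ) (d : ℝ) (hd : 0 < d)
    (c : ℤ → ℂ)
    (ε : ℝ) (hε : 0 < ε) (hsmall : ε * (1 + 4 / d) < 1)
    (k : ℤ)
    (μ : ℂ)
    (hzero : 1 + ∑' n : ℤ, c n / ((lam n : ℂ) - μ) = 0)
    (htail : ∑' n : {n : ℤ // n ≠ k}, ‖c (n : ℤ) / ((lam (n : ℤ) : ℂ) - μ)‖ < ε + 2 * ε / d) :
    ‖μ - (lam k : ℂ)‖ < d / (2 * ε) * ‖c k‖ := by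
  have hmargin : ε + 2 * ε / d + 2 * ε / d < 1 := by
    convert hsmall using 1
    field_simp
    ring
  have hsummable : Summable fun n => c n / ((lam n : ℂ) - μ) :=
    summable_of_one_add_tsum_eq_zero hzero
  have hsum : ∑' n : ℤ, c n / ((lam n : ℂ) - μ) = -1 := eq_neg_of_add_eq_zero_right hzero
  have hkey : 2 * ε / d < ‖c k / ((lam k : ℂ) - μ)‖ := by
    have := norm_tsum_le_norm_add_tsum_norm_ne hsummable k
    rw [hsum, norm_neg, norm_one] at this
    linarith
  calc ‖μ - (lam k : ℂ)‖ = ‖(lam k : ℂ) - μ‖ := norm_sub_rev _ _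
    _ < ‖c k‖ / (2 * ε / d) := norm_lt_of_lt_norm_div (by positivity) hkey
    _ = d / (2 * ε) * ‖c k‖ := by field_simp

theorem eigenvalue_offset_bound (lam : ℤ → ℝ) (d : ℝ) (hd : 0 < d)
    (hmono : StrictMono lam) (hgap : ∀ m n : ℤ, m ≠ n → d ≤ |lam m - lam n|)
    (c : ℤ → ℂ) (hc : Summable fun n => ‖c n‖)
    (ε : ℝ) (hε : 0 < ε) (hsmall : ε * (1 + 4 / d) < 1)
    (k : ℤ) (hck : ‖c k‖ < ε)
    (μ : ℂ) (hμk : ‖μ - (lam k : ℂ)‖ < d / 2)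
    (hzero : 1 + ∑' n : ℤ, c n / ((lam n : ℂ) - μ) = 0)
    (htail : ∑' n : {n : ℤ // n ≠ k}, ‖c (n : ℤ) / ((lam (n : ℤ) : ℂ) - μ)‖ < ε + 2 * ε / d) :
    ‖μ - (lam k : ℂ)‖ < d / (2 * ε) * ‖c k‖ :=
  eigenvalue_offset_bound_general lam d hd c ε hε hsmall k μ hzero htail
end
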